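/- arXiv:1603.01486 — 8 statements merged into one kernel-verified Lean document; each statement's English description precedes it below -/
import Mathlib

section
/- Let G be a graph of maximum degree Δ and let ε < 1/5. Call an edge uv a friend edge if |N(u) ∩ N(v)| ≥ (1-ε)Δ, and call a vertex dense if it has at least (1-ε)Δ neighbors joined to it by friend edges. If x and y are dense vertices connected by a path of friend edges all of whose vertices are dense, then |N(x) ∩ N(y)| ≥ (1-2ε)Δ. -/
open Finset

attribute [local instance] Classical.propDecidable

variable {V : Type*}

/-- `uv` is a friend edge: they are adjacent and share at least `(1-ε)Δ` neighbors. -/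
def friendAdj [Fintype V] [DecidableEq V] (G : SimpleGraph V) [DecidableRel G.Adj]
    (Δ : ℕ) (ε : ℝ) (u v : V) : Prop :=
  G.Adj u v ∧ (1 - ε) * (Δ : ℝ) ≤ ((G.neighborFinset u ∩ G.neighborFinset v).card : ℝ)

/-- The friends of `v`. -/
noncomputable def friends [Fintype V] [DecidableEq V] (G : SimpleGraph V) [DecidableRel G.Adj]
    (Δ : ℕ) (ε : ℝ) (v : V) : Finset V :=
  Finset.univ.filter (fun w => friendAdj G Δ ε v w)

/-- `v` is dense: it has at least `(1-ε)Δ` friends. -/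
def isDense [Fintype V] [DecidableEq V] (G : SimpleGraph V) [DecidableRel G.Adj]
    (Δ : ℕ) (ε : ℝ) (v : V) : Prop :=
  (1 - ε) * (Δ : ℝ) ≤ ((friends G Δ ε v).card : ℝ)

/-- The graph on dense vertices whose edges are the friend edges; its connected
components are the almost-cliques. -/
def friendGraph [Fintype V] [DecidableEq V] (G : SimpleGraph V) [DecidableRel G.Adj]
    (Δ : ℕ) (ε : ℝ) : SimpleGraph V where
  Adj u v := friendAdj G Δ ε u v ∧ isDense G Δ ε u ∧ isDense G Δ ε v
  symm := ⟨by
    rintro u v ⟨⟨hadj, hcard⟩, hu, hv⟩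
    exact ⟨⟨hadj.symm, by rwa [Finset.inter_comm]⟩, hv, hu⟩⟩
  loopless := ⟨fun v h => G.irrefl h.1.1⟩

/-!
Walk along the friend path from `x`, keeping `|N(x) ∩ N(v)| ≥ (1-2ε)Δ`. Crossing a friend edge
`vw` loses at most `εΔ`, because `|N(x) ∩ N(w)| ≥ |N(x) ∩ N(v)| + |N(v) ∩ N(w)| - Δ`. The
resulting overlap `(1-3ε)Δ` between the dense vertices `x` and `w` forces them to have a common
friend `f`, and going through `f` instead gives back `(1-ε)Δ + (1-ε)Δ - Δ = (1-2ε)Δ`.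
-/

theorem Finset.card_inter_add_card_inter_le {α : Type*} [DecidableEq α] (A B C : Finset α) :
    #(A ∩ B) + #(B ∩ C) ≤ #(A ∩ C) + #B :=
  calc #(A ∩ B) + #(B ∩ C) = #(A ∩ B ∩ (B ∩ C)) + #(A ∩ B ∪ B ∩ C) :=
        (card_inter_add_card_union _ _).symm
    _ ≤ #(A ∩ C) + #B := by
        refine add_le_add (card_le_card fun z hz => ?_) (card_le_card ?_)
        · simp only [mem_inter] at hz ⊢
          tauto
        · exact union_subset inter_subset_right inter_subset_left

section

variable [Fintype V] [DecidableEq V] {G : SimpleGraph V} [DecidableRel G.Adj] {Δ : ℕ} {ε : ℝ}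

theorem card_neighborFinset_inter_add_le (hΔ : ∀ w, G.degree w ≤ Δ) (a b c : V) :
    (#(G.neighborFinset a ∩ G.neighborFinset b) : ℝ)
      + #(G.neighborFinset b ∩ G.neighborFinset c)
      ≤ #(G.neighborFinset a ∩ G.neighborFinset c) + Δ := by
  have h := card_inter_add_card_inter_le (G.neighborFinset a) (G.neighborFinset b)
    (G.neighborFinset c)
  rw [G.card_neighborFinset_eq_degree] at h
  exact_mod_cast h.trans (Nat.add_le_add_left (hΔ b) _)

theorem friends_subset_neighborFinset (v : V) : friends G Δ ε v ⊆ G.neighborFinset v :=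
  fun _ hw => (G.mem_neighborFinset _ _).mpr (mem_filter.mp hw).2.1

theorem isDense.le_degree {v : V} (hv : isDense G Δ ε v) : (1 - ε) * Δ ≤ G.degree v := by
  rw [← G.card_neighborFinset_eq_degree]
  exact hv.trans (by exact_mod_cast card_le_card (friends_subset_neighborFinset v))

theorem isDense.mul_nonneg (hΔ : ∀ w, G.degree w ≤ Δ) {v : V} (hv : isDense G Δ ε v) :
    0 ≤ ε * Δ := by
  have := hv.le_degree.trans (Nat.cast_le.mpr (hΔ v) : (G.degree v : ℝ) ≤ Δ)
  linarith

theorem le_card_neighborFinset_inter_of_friendAdj (hΔ : ∀ w, G.degree w ≤ Δ) {u f w : V}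
    (huf : friendAdj G Δ ε u f) (hwf : friendAdj G Δ ε w f) :
    (1 - 2 * ε) * Δ ≤ #(G.neighborFinset u ∩ G.neighborFinset w) := by
  have hfw := hwf.2
  rw [inter_comm] at hfw
  linarith [huf.2, card_neighborFinset_inter_add_le hΔ u f w]

/-- The friend sets of `u` and `w` are two sets of size `(1-ε)Δ` inside `N(u) ∪ N(w)`, which has
at most `(1+3ε)Δ` vertices, so they share `(1-5ε)Δ > 0` vertices. -/
theorem exists_common_friend (hΔ : ∀ w, G.degree w ≤ Δ) (hΔpos : 0 < Δ) (hε : ε < 1 / 5)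
    {u w : V} (hu : isDense G Δ ε u) (hw : isDense G Δ ε w)
    (huw : (1 - 3 * ε) * Δ ≤ #(G.neighborFinset u ∩ G.neighborFinset w)) :
    ∃ f, friendAdj G Δ ε u f ∧ friendAdj G Δ ε w f := by
  have hfriends : (#(friends G Δ ε u ∩ friends G Δ ε w) : ℝ)
      + #(friends G Δ ε u ∪ friends G Δ ε w)
      = #(friends G Δ ε u) + #(friends G Δ ε w) := by
    exact_mod_cast card_inter_add_card_union _ _
  have hnbrs : (#(G.neighborFinset u ∩ G.neighborFinset w) : ℝ)
      + #(G.neighborFinset u ∪ G.neighborFinset w) = G.degree u + G.degree w := by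
    rw [← G.card_neighborFinset_eq_degree, ← G.card_neighborFinset_eq_degree]
    exact_mod_cast card_inter_add_card_union _ _
  have hunion : (#(friends G Δ ε u ∪ friends G Δ ε w) : ℝ)
      ≤ #(G.neighborFinset u ∪ G.neighborFinset w) := by
    exact_mod_cast card_le_card (union_subset_union (friends_subset_neighborFinset u)
      (friends_subset_neighborFinset w))
  have hdu : (G.degree u : ℝ) ≤ Δ := by exact_mod_cast hΔ u
  have hdw : (G.degree w : ℝ) ≤ Δ := by exact_mod_cast hΔ w
  have hslack : 0 < (1 - 5 * ε) * (Δ : ℝ) := mul_pos (by linarith) (by exact_mod_cast hΔpos)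
  have hpos : (0 : ℝ) < #(friends G Δ ε u ∩ friends G Δ ε w) := by
    unfold isDense at hu hw
    linarith
  obtain ⟨f, hf⟩ := card_pos.mp (by exact_mod_cast hpos)
  exact ⟨f, (mem_filter.mp (mem_inter.mp hf).1).2, (mem_filter.mp (mem_inter.mp hf).2).2⟩

theorem le_card_neighborFinset_inter_of_isDense (hΔ : ∀ w, G.degree w ≤ Δ) (hε : ε < 1 / 5)
    {u w : V} (hu : isDense G Δ ε u) (hw : isDense G Δ ε w)
    (huw : (1 - 3 * ε) * Δ ≤ #(G.neighborFinset u ∩ G.neighborFinset w)) :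
    (1 - 2 * ε) * Δ ≤ #(G.neighborFinset u ∩ G.neighborFinset w) := by
  rcases Nat.eq_zero_or_pos Δ with rfl | hΔpos
  · simp
  obtain ⟨f, huf, hwf⟩ := exists_common_friend hΔ hΔpos hε hu hw huw
  exact le_card_neighborFinset_inter_of_friendAdj hΔ huf hwf

end

theorem stmt_0_general [Fintype V] [DecidableEq V] (G : SimpleGraph V) [DecidableRel G.Adj]
    (Δ : ℕ) (ε : ℝ) (hΔ : ∀ w, G.degree w ≤ Δ) (hε : ε < 1/5)
    (x y : V) (hx : isDense G Δ ε x)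
    (hreach : (friendGraph G Δ ε).Reachable x y) :
    (1 - 2*ε) * (Δ : ℝ) ≤ ((G.neighborFinset x ∩ G.neighborFinset y).card : ℝ) := by
  rw [SimpleGraph.reachable_iff_reflTransGen] at hreach
  induction hreach with
  | refl =>
    rw [inter_self, G.card_neighborFinset_eq_degree]
    linarith [hx.le_degree, hx.mul_nonneg hΔ]
  | @tail v w _ hvw ih =>
    obtain ⟨⟨_, hfriend⟩, _, hw⟩ := hvw
    apply le_card_neighborFinset_inter_of_isDense hΔ hε hx hw
    linarith [card_neighborFinset_inter_add_le hΔ x v w]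

/-- If `x` and `y` are dense vertices connected by a path of friend edges all of whose
vertices are dense, then `|N(x) ∩ N(y)| ≥ (1-2ε)Δ`. -/
theorem stmt_0 [Fintype V] [DecidableEq V] (G : SimpleGraph V) [DecidableRel G.Adj]
    (Δ : ℕ) (ε : ℝ) (hΔ : ∀ w, G.degree w ≤ Δ) (hε0 : 0 < ε) (hε : ε < 1/5)
    (x y : V) (hx : isDense G Δ ε x) (hy : isDense G Δ ε y)
    (hreach : (friendGraph G Δ ε).Reachable x y) :
    (1 - 2*ε) * (Δ : ℝ) ≤ ((G.neighborFinset x ∩ G.neighborFinset y).card : ℝ) :=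
  stmt_0_general G Δ ε hΔ hε x y hx hreach
end

section
/- Let v be a vertex with palette Pal(v) of size Q(v) and degree d(v) in a graph, and suppose some neighbors are assigned colors forming a proper partial coloring. Define the surplus after removing colored neighbors and used colors: if a color c ∉ Pal(v) is used by at least one neighbor, or a color c ∈ Pal(v) is used by at least two (non-adjacent) neighbors, call c good for v, and let J be the set of good colors. Then the residual surplus S₀(v) = |residual palette| − |residual uncolored neighbors| satisfies S₀(v) ≥ S(v) + |J|, where S(v) = Q(v) − d(v) is the initial surplus; in particular if S(v) ≥ 0 then S₀(v) ≥ |J|. -/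
open Finset

attribute [local instance] Classical.propDecidable

/-- Surplus gain from good colors: given a proper partial coloring of the neighbors of a
vertex with palette `Pal`, the residual surplus (residual palette size minus number of
uncolored neighbors) is at least the initial surplus `|Pal| - |Nv|` plus the number of
good colors, where a color `c` is good if it is used by at least `1 + [c ∈ Pal]`
neighbors. -/
theorem stmt_6 {alpha C : Type*} [DecidableEq alpha] [DecidableEq C]
    (Nv : Finset alpha) (Pal : Finset C) (Adj : alpha → alpha → Prop) (χ : alpha → Option C)
    (hproper : ∀ u ∈ Nv, ∀ w ∈ Nv, u ≠ w → Adj u w → χ u = none ∨ χ u ≠ χ w) :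
    ((Pal.card : ℤ) - (Nv.card : ℤ))
      + (((Nv.biUnion fun w => (χ w).toFinset).filter
          (fun c => 1 + (if c ∈ Pal then 1 else 0)
              ≤ (Nv.filter fun w => χ w = some c).card)).card : ℤ)
    ≤ ((Pal \ (Nv.biUnion fun w => (χ w).toFinset)).card : ℤ)
        - ((Nv.filter fun w => χ w = none).card : ℤ) := by
  classical
  set U := Nv.biUnion fun w => (χ w).toFinset with hU
  set J := U.filter
      (fun c => 1 + (if c ∈ Pal then 1 else 0)
          ≤ (Nv.filter fun w => χ w = some c).card) with hJ
  have hmemU : ∀ c : C, c ∈ U ↔ ∃ w ∈ Nv, χ w = some c := by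
    intro c
    simp [hU, Option.mem_toFinset, Option.mem_def]
  -- split Nv into colored and uncolored
  have hsplit : (Nv.filter fun w => χ w = none).card
      + (Nv.filter fun w => ¬ (χ w = none)).card = Nv.card :=
    Finset.card_filter_add_card_filter_not _
  -- colored vertices as a disjoint union over used colors
  have hcolored : (Nv.filter fun w => ¬ (χ w = none))
      = U.biUnion (fun c => Nv.filter fun w => χ w = some c) := by
    ext w
    simp only [Finset.mem_filter, Finset.mem_biUnion]
    constructor
    · rintro ⟨hw, hne⟩
      obtain ⟨c, hc⟩ := Option.ne_none_iff_exists'.mp hne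
      exact ⟨c, (hmemU c).mpr ⟨w, hw, hc⟩, hw, hc⟩
    · rintro ⟨c, _, hw, hc⟩
      exact ⟨hw, by simp [hc]⟩
  have hdisj : ∀ c ∈ U, ∀ c' ∈ U, c ≠ c' →
      Disjoint (Nv.filter fun w => χ w = some c) (Nv.filter fun w => χ w = some c') := by
    intro c _ c' _ hne
    rw [Finset.disjoint_left]
    intro w hw hw'
    rw [Finset.mem_filter] at hw hw'
    exact hne (Option.some_injective _ (hw.2 ▸ hw'.2 ▸ rfl))
  have hcard : (Nv.filter fun w => ¬ (χ w = none)).card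
      = ∑ c ∈ U, (Nv.filter fun w => χ w = some c).card := by
    rw [hcolored, Finset.card_biUnion hdisj]
  -- lower bound for the sum
  have hsum : ∑ c ∈ U, ((if c ∈ Pal then 1 else 0) + (if c ∈ J then 1 else 0))
      ≤ ∑ c ∈ U, (Nv.filter fun w => χ w = some c).card := by
    apply Finset.sum_le_sum
    intro c hc
    have hnonempty : 1 ≤ (Nv.filter fun w => χ w = some c).card := by
      obtain ⟨w, hw, hcw⟩ := (hmemU c).mp hc
      exact Finset.card_pos.mpr ⟨w, Finset.mem_filter.mpr ⟨hw, hcw⟩⟩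
    by_cases hcJ : c ∈ J
    · have := (Finset.mem_filter.mp hcJ).2
      simp only [hcJ, if_pos]
      omega
    · by_cases hcP : c ∈ Pal
      · simpa [hcJ, hcP] using hnonempty
      · simp [hcJ, hcP]
  have hsum_eq : ∑ c ∈ U, ((if c ∈ Pal then 1 else 0) + (if c ∈ J then 1 else 0))
      = (U ∩ Pal).card + J.card := by
    rw [Finset.sum_add_distrib]
    congr 1
    · rw [Finset.sum_ite_mem, Finset.sum_const, smul_eq_mul, mul_one]
    · have : ∑ c ∈ U, (if c ∈ J then 1 else 0) = (U ∩ J).card := by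
        rw [Finset.sum_ite_mem, Finset.sum_const, smul_eq_mul, mul_one]
      rw [this, Finset.inter_eq_right.mpr (Finset.filter_subset _ _)]
  -- palette split
  have hpal : (Pal \ U).card + (Pal ∩ U).card = Pal.card :=
    Finset.card_sdiff_add_card_inter _ _
  have hPU : (Pal ∩ U).card = (U ∩ Pal).card := by rw [Finset.inter_comm]
  have key : (U ∩ Pal).card + J.card ≤ (Nv.filter fun w => ¬ (χ w = none)).card := by
    rw [hcard]; rw [hsum_eq] at hsum; exact hsum
  -- assemble
  have : (Pal.card : ℤ) - Nv.card + J.card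
      ≤ (Pal \ U).card - (Nv.filter fun w => χ w = none).card := by
    have h1 : (Nv.card : ℤ) = (Nv.filter fun w => χ w = none).card
        + (Nv.filter fun w => ¬ (χ w = none)).card := by exact_mod_cast hsplit.symm
    have h2 : (Pal.card : ℤ) = (Pal \ U).card + (U ∩ Pal).card := by
      rw [← hPU]; exact_mod_cast hpal.symm
    have h3 : ((U ∩ Pal).card : ℤ) + J.card
        ≤ (Nv.filter fun w => ¬ (χ w = none)).card := by exact_mod_cast key
    linarith
  exact this
end

section
/- Let D, Z > 0 with δ := D/Z satisfying δ ≤ 1/K for a sufficiently large constant K (K ≥ 100 suffices), and D ≥ 2. Let v satisfy Q(v) ≥ Z, d(v) + a(v) ≤ Q(v) + D where a(v) ≤ D. Set γ = 1 − 2√δ, M ≤ Q(v) + D, and L = ⌈Mγ⌉. Then Q(v) − L ≥ Z√δ + D. -/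
/-!
Write `s = √(D/Z)`. Since `Z ≥ 100 D`, `Z s = √(DZ) ≥ 10 D`, and in particular `γ = 1 - 2s ≥ 0`.
Then `⌈Mγ⌉ < (Q + D)(1 - 2s) + 1`, so `Q - ⌈Mγ⌉ > 2sQ + 2sD - D - 1 ≥ 2Zs - D - 1`,
which is at least `Zs + D` because `Zs ≥ 10 D ≥ 2D + 1`.
-/

lemma mul_le_mul_sqrt_div_of_sq_mul_le {c D Z : ℝ} (hc : 0 ≤ c) (hD : 0 ≤ D) (hZ : 0 < Z)
    (h : c ^ 2 * D ≤ Z) : c * D ≤ Z * √(D / Z) := by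
  have hZD : Z * √(D / Z) = √(Z * D) := by
    rw [show Z * D = Z * Z * (D / Z) by field_simp, Real.sqrt_mul (mul_self_nonneg Z),
      Real.sqrt_mul_self hZ.le]
  rw [hZD, Real.le_sqrt (mul_nonneg hc hD) (mul_nonneg hZ.le hD)]
  nlinarith

lemma Int.ceil_mul_lt_add_one_of_le {M N γ : ℝ} (hMN : M ≤ N) (hγ : 0 ≤ γ) :
    (⌈M * γ⌉ : ℝ) < N * γ + 1 :=
  (Int.ceil_lt_add_one _).trans_le (by gcongr)

/-- Real-arithmetic bound: with `δ = D/Z ≤ 1/K` for `K ≥ 100`, `D ≥ 2`, `Q ≥ Z`,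
`M ≤ Q + D`, `γ = 1 - 2√δ` and `L = ⌈Mγ⌉`, one has `Q - L ≥ Z√δ + D`. -/
theorem stmt_9 (K D Z Q M : ℝ) (hK : 100 ≤ K) (hD : 2 ≤ D) (hZ : 0 < Z)
    (hdelta : D / Z ≤ 1 / K) (hQ : Z ≤ Q) (hM : M ≤ Q + D) :
    Z * Real.sqrt (D / Z) + D ≤
      Q - ((⌈M * (1 - 2 * Real.sqrt (D / Z))⌉ : ℤ) : ℝ) := by
  set s := √(D / Z)
  have hδ : D / Z ≤ 1 / 10 ^ 2 :=
    hdelta.trans (one_div_le_one_div_of_le (by norm_num) (by linarith))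
  have hs : s ≤ 1 / 10 := by
    calc s ≤ √(1 / 10 ^ 2) := Real.sqrt_le_sqrt hδ
      _ = 1 / 10 := by rw [one_div, Real.sqrt_inv, Real.sqrt_sq (by norm_num), one_div]
  have hZD : 10 ^ 2 * D ≤ Z := by
    rw [div_le_iff₀ hZ] at hδ
    linarith
  have hZs : 10 * D ≤ Z * s :=
    mul_le_mul_sqrt_div_of_sq_mul_le (by norm_num) (by linarith) hZ hZD
  have hceil := Int.ceil_mul_lt_add_one_of_le hM (show 0 ≤ 1 - 2 * s by linarith)
  have hQs : Z * s ≤ Q * s := mul_le_mul_of_nonneg_right hQ (Real.sqrt_nonneg _)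
  have hDs : 0 ≤ D * s := mul_nonneg (by linarith) (Real.sqrt_nonneg _)
  linarith
end

section
/- With D₀ = 3εΔ, Z₀ = Δ/2, D_{i+1} = 12 D_i √(δ_i), Z_{i+1} = D_i/√(δ_i), δ_i = D_i/Z_i, and ε = 100^{-√(ln Δ)}/(100K) for a constant K ≥ 1, we have δ_i ≤ 1/K for all 0 ≤ i ≤ ⌈√(ln Δ)⌉. -/
/-!
Each step of the recurrence multiplies `δ = D/Z` by exactly `12`, since
`(12 D √δ) / (D / √δ) = 12 (√δ)² = 12 δ`; with `δ₀ = 6ε` this gives the closed form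
`δ_i = 6ε · 12^i`. For `i ≤ ⌈s⌉` with `s = √(ln Δ)` we have `12^i ≤ 12^(s+1) ≤ 12 · 100^s`,
so `δ_i ≤ 72 · 100^s · 100^(-s) / (100 K) < 1/K`.
-/

open Real

theorem mul_sqrt_div_div_sqrt (c : ℝ) {d z : ℝ} (h : 0 ≤ d / z) :
    c * d * √(d / z) / (d / √(d / z)) = c * (d / z) := by
  rcases eq_or_ne d 0 with rfl | hd
  · simp
  rcases h.eq_or_lt with h0 | hpos
  · simp [← h0]
  rw [div_div_eq_mul_div, mul_assoc, mul_self_sqrt hpos.le]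
  field_simp

theorem div_eq_pow_mul_of_sqrt_recurrence {c : ℝ} (hc : 0 ≤ c) {D Z : ℕ → ℝ}
    (hD : ∀ i, D (i + 1) = c * D i * √(D i / Z i))
    (hZ : ∀ i, Z (i + 1) = D i / √(D i / Z i)) (h₀ : 0 ≤ D 0 / Z 0) (i : ℕ) :
    D i / Z i = c ^ i * (D 0 / Z 0) := by
  induction i with
  | zero => simp
  | succ i ih =>
    have hi : 0 ≤ D i / Z i := ih ▸ by positivity
    rw [hD, hZ, mul_sqrt_div_div_sqrt c hi, ih, pow_succ]
    ring

theorem pow_le_mul_rpow_of_le_ceil {a b s : ℝ} (ha : 1 ≤ a) (hab : a ≤ b) (hs : 0 ≤ s)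
    {i : ℕ} (hi : i ≤ ⌈s⌉₊) : a ^ i ≤ a * b ^ s := by
  have hi' : (i : ℝ) ≤ s + 1 := by
    have hceil := Nat.ceil_lt_add_one hs
    have hi_cast : (i : ℝ) ≤ ⌈s⌉₊ := by exact_mod_cast hi
    linarith
  calc a ^ i = a ^ (i : ℝ) := (rpow_natCast a i).symm
    _ ≤ a ^ (s + 1) := rpow_le_rpow_of_exponent_le ha hi'
    _ = a * a ^ s := by rw [rpow_add_one (by positivity), mul_comm]
    _ ≤ a * b ^ s := by gcongr

/-- With `ε = 100^{-√(ln Δ)}/(100K)` and the recurrence `D₀ = 3εΔ`, `Z₀ = Δ/2`,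
`D_{i+1} = 12 D_i √(δ_i)`, `Z_{i+1} = D_i/√(δ_i)`, `δ_i = D_i/Z_i`, we have
`δ_i ≤ 1/K` for all `0 ≤ i ≤ ⌈√(ln Δ)⌉`. -/
theorem stmt_11 (Δ K ε : ℝ) (hΔ : 1 < Δ) (hK : 1 ≤ K)
    (hε : ε = (100 : ℝ) ^ (-Real.sqrt (Real.log Δ)) / (100 * K))
    (D Z : ℕ → ℝ) (hD0 : D 0 = 3 * ε * Δ) (hZ0 : Z 0 = Δ / 2)
    (hD : ∀ i, D (i + 1) = 12 * D i * Real.sqrt (D i / Z i))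
    (hZ : ∀ i, Z (i + 1) = D i / Real.sqrt (D i / Z i)) :
    ∀ i ≤ ⌈Real.sqrt (Real.log Δ)⌉₊, D i / Z i ≤ 1 / K := by
  intro i hi
  set s := √(log Δ)
  have hK₀ : 0 < K := by linarith
  have hε₀ : 0 ≤ ε := hε ▸ by positivity
  have hδ₀ : D 0 / Z 0 = 6 * ε := by
    rw [hD0, hZ0]
    field_simp [(by linarith : Δ ≠ 0)]
    ring
  have h12 : (12 : ℝ) ^ i ≤ 12 * 100 ^ s :=
    pow_le_mul_rpow_of_le_ceil (by norm_num) (by norm_num) (sqrt_nonneg _) hi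
  calc D i / Z i = 12 ^ i * (6 * ε) := by
        rw [div_eq_pow_mul_of_sqrt_recurrence (by norm_num) hD hZ (by rw [hδ₀]; positivity), hδ₀]
    _ ≤ 12 * 100 ^ s * (6 * ε) := by gcongr
    _ = 72 / 100 / K := by
        rw [hε, rpow_neg (by norm_num)]
        field_simp
        ring
    _ ≤ 1 / K := by gcongr; norm_num
end

section
/- With the recurrence D_{i+1} = 12 D_i √(δ_i), δ_i = D_i/Z_i, Z_{i+1} = D_i/√(δ_i), D₀ = 3εΔ, the closed form D_i = D₀ · ∏_{j=0}^{i-1} 12√(δ_j) holds, and for ε = 100^{-√(ln Δ)}/(100K), K ≥ 1, and 5 ≤ i ≤ ⌈√(ln Δ)⌉, one has D_i ≤ 12^{i²/2} · 10^{-i√(ln Δ)} · Δ. -/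
/-!
Writing `δ_i = D_i / Z_i`, the recurrence gives `δ_{i+1} = 12 δ_i`, so `δ_i = 12^i · 6ε`. Each step
multiplies `D` by `12 √(12^i · 6ε)`, which is at most `√12^(2i+1) · 10^(-√(ln Δ))` because
`100 ε ≤ 100^(-√(ln Δ))`. Since `∑_{j<i} (2j+1) = i²`, the factors telescope to
`D_i ≤ √12^(i²) · 10^(-i√(ln Δ)) · D_0`, and `D_0 = 3εΔ ≤ Δ`.
-/

theorem pos_of_recurrence {D Z : ℕ → ℝ} (hD : ∀ i, D (i + 1) = 12 * D i * √(D i / Z i))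
    (hZ : ∀ i, Z (i + 1) = D i / √(D i / Z i))
    (hD0 : 0 < D 0) (hZ0 : 0 < Z 0) (i : ℕ) : 0 < D i ∧ 0 < Z i := by
  induction i with
  | zero => exact ⟨hD0, hZ0⟩
  | succ n ih =>
    obtain ⟨hDn, hZn⟩ := ih
    have : 0 < √(D n / Z n) := Real.sqrt_pos.mpr (div_pos hDn hZn)
    exact ⟨by rw [hD]; positivity, by rw [hZ]; positivity⟩

theorem ratio_succ_of_recurrence {D Z : ℕ → ℝ} (hD : ∀ i, D (i + 1) = 12 * D i * √(D i / Z i))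
    (hZ : ∀ i, Z (i + 1) = D i / √(D i / Z i))
    {i : ℕ} (hDi : 0 < D i) (hZi : 0 < Z i) :
    D (i + 1) / Z (i + 1) = 12 * (D i / Z i) := by
  have hδ : 0 < D i / Z i := div_pos hDi hZi
  rw [hD, hZ, div_div_eq_mul_div, mul_assoc, mul_assoc, ← sq, Real.sq_sqrt hδ.le]
  field_simp

theorem ratio_eq_of_recurrence {D Z : ℕ → ℝ} (hD : ∀ i, D (i + 1) = 12 * D i * √(D i / Z i))
    (hZ : ∀ i, Z (i + 1) = D i / √(D i / Z i))
    (hD0 : 0 < D 0) (hZ0 : 0 < Z 0) (i : ℕ) :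
    D i / Z i = 12 ^ i * (D 0 / Z 0) := by
  induction i with
  | zero => simp
  | succ n ih =>
    obtain ⟨hDn, hZn⟩ := pos_of_recurrence hD hZ hD0 hZ0 n
    rw [ratio_succ_of_recurrence hD hZ hDn hZn, ih, pow_succ]; ring

theorem eq_mul_prod_range_of_succ {u c : ℕ → ℝ} (h : ∀ n, u (n + 1) = u n * c n) (i : ℕ) :
    u i = u 0 * ∏ j ∈ Finset.range i, c j := by
  induction i with
  | zero => simp
  | succ n ih => rw [Finset.prod_range_succ, ← mul_assoc, ← ih, h]

theorem twelve_mul_sqrt_le {δ t : ℝ} (hδ : 0 ≤ δ) (ht : 0 ≤ t) (hδt : 12 * δ ≤ t ^ 2) (n : ℕ) :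
    12 * √(12 ^ n * δ) ≤ √12 ^ (2 * n + 1) * t := by
  refine (pow_le_pow_iff_left₀ (by positivity) (by positivity) two_ne_zero).mp ?_
  have h12n : (1 : ℝ) ≤ 12 ^ n := one_le_pow₀ (by norm_num)
  calc (12 * √(12 ^ n * δ)) ^ 2 = 12 ^ n * (144 * δ) := by
        rw [mul_pow, Real.sq_sqrt (by positivity)]; ring
    _ ≤ 12 ^ n * (12 ^ n * (12 * t ^ 2)) := by gcongr 12 ^ n * ?_; nlinarith
    _ = (√12 ^ (2 * n + 1) * t) ^ 2 := by
        rw [mul_pow, ← pow_mul, mul_comm (2 * n + 1), pow_mul, Real.sq_sqrt (by norm_num)]; ring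

theorem le_pow_sq_mul_pow_mul {u : ℕ → ℝ} {a t M : ℝ} (ha : 0 ≤ a) (ht : 0 ≤ t)
    (h0 : u 0 ≤ M) (hstep : ∀ n, u (n + 1) ≤ u n * (a ^ (2 * n + 1) * t)) (i : ℕ) :
    u i ≤ a ^ (i ^ 2) * t ^ i * M := by
  induction i with
  | zero => simpa using h0
  | succ n ih =>
    calc u (n + 1) ≤ u n * (a ^ (2 * n + 1) * t) := hstep n
      _ ≤ a ^ (n ^ 2) * t ^ n * M * (a ^ (2 * n + 1) * t) := by gcongr
      _ = a ^ ((n + 1) ^ 2) * t ^ (n + 1) * M := by ring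

theorem hundred_mul_le_rpow_sq {s K : ℝ} (hK : 1 ≤ K) :
    100 * ((100 : ℝ) ^ (-s) / (100 * K)) ≤ ((10 : ℝ) ^ (-s)) ^ 2 := by
  rw [sq, ← Real.mul_rpow (by norm_num) (by norm_num), ← mul_div_assoc,
    mul_div_mul_left _ _ (by norm_num : (100 : ℝ) ≠ 0)]
  norm_num
  exact div_le_self (by positivity) hK

theorem rpow_div_two_eq_sqrt_pow {x : ℝ} (hx : 0 ≤ x) (n : ℕ) : x ^ ((n : ℝ) / 2) = √x ^ n := by
  rw [Real.sqrt_eq_rpow, ← Real.rpow_natCast, ← Real.rpow_mul hx]; ring_nf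

/-- Closed form `D_i = D₀·∏_{j<i} 12√(δ_j)`, and for `ε = 100^{-√(ln Δ)}/(100K)` and
`5 ≤ i ≤ ⌈√(ln Δ)⌉`, the bound `D_i ≤ 12^{i²/2}·10^{-i√(ln Δ)}·Δ`. -/
theorem stmt_12 (Δ K ε : ℝ) (hΔ : Real.exp 25 < Δ) (hK : 1 ≤ K)
    (hε : ε = (100 : ℝ) ^ (-Real.sqrt (Real.log Δ)) / (100 * K))
    (D Z : ℕ → ℝ) (hD0 : D 0 = 3 * ε * Δ) (hZ0 : Z 0 = Δ / 2)
    (hD : ∀ i, D (i + 1) = 12 * D i * Real.sqrt (D i / Z i))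
    (hZ : ∀ i, Z (i + 1) = D i / Real.sqrt (D i / Z i)) :
    (∀ i, D i = D 0 * ∏ j ∈ Finset.range i, 12 * Real.sqrt (D j / Z j)) ∧
    (∀ i : ℕ, 5 ≤ i → i ≤ ⌈Real.sqrt (Real.log Δ)⌉₊ →
      D i ≤ (12 : ℝ) ^ ((i : ℝ) ^ 2 / 2) *
        (10 : ℝ) ^ (-(i : ℝ) * Real.sqrt (Real.log Δ)) * Δ) := by
  set s := √(Real.log Δ)
  set t : ℝ := 10 ^ (-s)
  have hΔ0 : 0 < Δ := (Real.exp_pos 25).trans hΔ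
  have ht0 : 0 ≤ t := by positivity
  have ht1 : t ≤ 1 :=
    Real.rpow_le_one_of_one_le_of_nonpos (by norm_num) (neg_nonpos.2 (Real.sqrt_nonneg _))
  have hε0 : 0 < ε := by rw [hε]; positivity
  have hεt : 100 * ε ≤ t ^ 2 := hε ▸ hundred_mul_le_rpow_sq hK
  have hpos := pos_of_recurrence hD hZ (by rw [hD0]; positivity) (by rw [hZ0]; positivity)
  have hratio (i : ℕ) : D i / Z i = 12 ^ i * (6 * ε) := by
    rw [ratio_eq_of_recurrence hD hZ (hpos 0).1 (hpos 0).2, hD0, hZ0]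
    field_simp; ring
  refine ⟨eq_mul_prod_range_of_succ fun n => by rw [hD]; ring, fun i _ _ => ?_⟩
  have hstep (n : ℕ) : D (n + 1) ≤ D n * (√12 ^ (2 * n + 1) * t) := by
    rw [hD, hratio, mul_comm 12 (D n), mul_assoc]
    exact mul_le_mul_of_nonneg_left
      (twelve_mul_sqrt_le (by positivity) ht0 (by linarith) n) (hpos n).1.le
  have hD0Δ : D 0 ≤ Δ := by
    have : 3 * ε ≤ 1 := by nlinarith
    rw [hD0]; exact mul_le_of_le_one_left hΔ0.le this
  have h12 : (12 : ℝ) ^ ((i : ℝ) ^ 2 / 2) = √12 ^ (i ^ 2) := by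
    rw [← rpow_div_two_eq_sqrt_pow (by norm_num)]; push_cast; rfl
  have h10 : (10 : ℝ) ^ (-(i : ℝ) * s) = t ^ i := by
    rw [← Real.rpow_mul_natCast (by norm_num)]; ring_nf
  rw [h12, h10]
  exact le_pow_sq_mul_pow_mul (Real.sqrt_nonneg 12) ht0 hD0Δ hstep i
end

section
/- With the same recurrence and ε = 100^{-√(ln Δ)}/(100K), there exists a universal constant C such that D_{⌈√(ln Δ)⌉} ≤ C for all Δ ≥ 2 and all K ≥ 1. -/
lemma key_ineq (s t L l3 l6 l12 lK : ℝ) (hs : 0 < s) (h1 : s ≤ t) (h2 : t ≤ s + 1)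
    (ht1 : 1 ≤ t) (hK : 0 ≤ lK) (hl3 : l3 ≤ 1.099) (hl6a : 0 ≤ l6) (hl6 : l6 ≤ 1.7921)
    (hl12a : 0 ≤ l12) (hl12 : l12 ≤ 2.4852) (hL : 4.6044 ≤ L) :
    l3 + (-s*L - L - lK) + s^2 + t*l12 + (t/2)*(l6 + (-s*L - L - lK) + (t-1)*l12) ≤ 0 := by
  nlinarith [mul_nonneg hs.le hs.le, mul_nonneg (sub_nonneg.2 h1) (sub_nonneg.2 hK),
    mul_nonneg (sub_nonneg.2 h1) (sub_nonneg.2 hL),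
    mul_nonneg (mul_nonneg hs.le (sub_nonneg.2 h1)) (sub_nonneg.2 hL),
    mul_nonneg (sub_nonneg.2 h1) hl12a,
    mul_nonneg (sub_nonneg.2 (by linarith : t - 1 ≤ s)) hl12a,
    mul_nonneg (sub_nonneg.2 h2) (sub_nonneg.2 hl12),
    mul_nonneg (sub_nonneg.2 h2) hl12a,
    mul_nonneg (sub_nonneg.2 ht1) hl12a, sq_nonneg (s - 1), sq_nonneg s]

/-- There is a universal constant `C` such that for the recurrence with
`ε = 100^{-√(ln Δ)}/(100K)`, one has `D_{⌈√(ln Δ)⌉} ≤ C` for all `Δ ≥ 2`, `K ≥ 1`. -/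
theorem stmt_13 : ∃ C : ℝ, ∀ (Δ K ε : ℝ) (D Z : ℕ → ℝ),
    2 ≤ Δ → 1 ≤ K →
    ε = (100 : ℝ) ^ (-Real.sqrt (Real.log Δ)) / (100 * K) →
    D 0 = 3 * ε * Δ → Z 0 = Δ / 2 →
    (∀ i, D (i + 1) = 12 * D i * Real.sqrt (D i / Z i)) →
    (∀ i, Z (i + 1) = D i / Real.sqrt (D i / Z i)) →
    D ⌈Real.sqrt (Real.log Δ)⌉₊ ≤ C := by
  refine ⟨1, ?_⟩
  intro Δ K ε D Z hΔ hK hεdef hD0 hZ0 hDrec hZrec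
  have hΔ0 : (0:ℝ) < Δ := by linarith
  have hlog : 0 < Real.log Δ := Real.log_pos (by linarith)
  set s := Real.sqrt (Real.log Δ) with hs_def
  have hs : 0 < s := Real.sqrt_pos.2 hlog
  have hs2 : s^2 = Real.log Δ := Real.sq_sqrt hlog.le
  have hK0 : (0:ℝ) < K := by linarith
  have hε0 : 0 < ε := by rw [hεdef]; positivity
  set n := ⌈s⌉₊ with hn_def
  have hn1 : 1 ≤ n := Nat.ceil_pos.2 hs
  have hsn : s ≤ (n:ℝ) := Nat.le_ceil s
  have hns : (n:ℝ) ≤ s + 1 := (Nat.ceil_lt_add_one hs.le).le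
  -- invariant of the recurrence
  have inv : ∀ i, 0 < Z i ∧ D i = 6*ε*12^i * Z i := by
    intro i; induction i with
    | zero =>
      refine ⟨by rw [hZ0]; linarith, ?_⟩
      rw [hD0, hZ0]; ring
    | succ i ih =>
      obtain ⟨hZ, hD⟩ := ih
      have hc : (0:ℝ) < 6*ε*12^i := by positivity
      have hr : D i / Z i = 6*ε*12^i := by rw [hD]; field_simp
      have hsq : 0 < Real.sqrt (6*ε*12^i) := Real.sqrt_pos.2 hc
      have hDpos : 0 < D i := by rw [hD]; positivity
      refine ⟨by rw [hZrec, hr]; positivity, ?_⟩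
      rw [hDrec, hZrec, hr]
      have hss : Real.sqrt (6*ε*12^i) * Real.sqrt (6*ε*12^i) = 6*ε*12^i :=
        Real.mul_self_sqrt hc.le
      rw [show (6:ℝ)*ε*12^(i+1) * (D i / Real.sqrt (6*ε*12^i))
          = 12*(6*ε*12^i) * D i / Real.sqrt (6*ε*12^i) by ring]
      rw [eq_div_iff hsq.ne']
      linear_combination (12 * D i) * hss
  -- geometric-type bound
  set B : ℝ := 12 * Real.sqrt (6*ε*12^(n-1)) with hB_def
  have hB0 : 0 ≤ B := by positivity
  have bound : ∀ i, i ≤ n → D i ≤ 3*ε*Δ * B^i := by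
    intro i
    induction i with
    | zero => intro _; rw [hD0]; simp
    | succ i ih =>
      intro hin
      have hi_le : i ≤ n - 1 := by omega
      have hin' : i ≤ n := by omega
      obtain ⟨hZ, hD⟩ := inv i
      have hc : (0:ℝ) < 6*ε*12^i := by positivity
      have hr : D i / Z i = 6*ε*12^i := by rw [hD]; field_simp
      have hDpos : 0 < D i := by rw [hD]; positivity
      have hmono : Real.sqrt (6*ε*12^i) ≤ Real.sqrt (6*ε*12^(n-1)) := by
        apply Real.sqrt_le_sqrt
        have : (12:ℝ)^i ≤ 12^(n-1) := pow_le_pow_right₀ (by norm_num) hi_le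
        nlinarith
      have hsq0 : 0 ≤ Real.sqrt (6*ε*12^i) := Real.sqrt_nonneg _
      have := ih hin'
      calc D (i+1) = 12 * D i * Real.sqrt (6*ε*12^i) := by rw [hDrec, hr]
        _ ≤ 12 * (3*ε*Δ*B^i) * Real.sqrt (6*ε*12^(n-1)) := by
            refine mul_le_mul ?_ hmono hsq0 ?_
            · nlinarith [pow_nonneg hB0 i]
            · exact mul_nonneg (by norm_num)
                (mul_nonneg (mul_nonneg (mul_nonneg (by norm_num : (0:ℝ) ≤ 3) hε0.le)
                  hΔ0.le) (pow_nonneg hB0 i))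
        _ = 3*ε*Δ*B^(i+1) := by rw [hB_def]; ring
  have hDn := bound n le_rfl
  -- now show 3*ε*Δ*B^n ≤ 1
  set u : ℝ := 6*ε*12^(n-1) with hu_def
  have hu : 0 < u := by positivity
  have hsqu : 0 < Real.sqrt u := Real.sqrt_pos.2 hu
  have hpow : (Real.sqrt u)^n = u ^ ((n:ℝ)/2) := by
    rw [Real.sqrt_eq_rpow, ← Real.rpow_natCast (u ^ ((1:ℝ)/2)) n, ← Real.rpow_mul hu.le]
    congr 1; ring
  have hBn : B^n = 12^n * u ^ ((n:ℝ)/2) := by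
    rw [hB_def, mul_pow, hpow]
  -- logs
  have hL100 : (0:ℝ) < 100 := by norm_num
  have hlogε : Real.log ε = -s * Real.log 100 - Real.log 100 - Real.log K := by
    rw [hεdef, Real.log_div (by positivity) (by positivity),
      Real.log_rpow hL100, Real.log_mul (by norm_num) hK0.ne']
    ring
  have hlogu : Real.log u = Real.log 6 + Real.log ε + ((n:ℝ)-1) * Real.log 12 := by
    rw [hu_def, Real.log_mul (by positivity) (by positivity),
      Real.log_mul (by norm_num) hε0.ne', Real.log_pow]
    have h1 : ((n-1:ℕ):ℝ) = (n:ℝ) - 1 := by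
      push_cast [Nat.cast_sub hn1]; ring
    rw [h1]; try ring
  set X : ℝ := 3*ε*Δ*B^n with hX_def
  have hX0 : 0 < X := by
    rw [hX_def, hBn]; positivity
  have hlogX : Real.log X = Real.log 3 + Real.log ε + Real.log Δ + (n:ℝ) * Real.log 12
      + ((n:ℝ)/2) * Real.log u := by
    rw [hX_def, hBn]
    have hu2 : (u ^ ((n:ℝ)/2)) ≠ 0 := (Real.rpow_pos_of_pos hu _).ne'
    rw [Real.log_mul (by positivity) (mul_ne_zero (by positivity) hu2),
      Real.log_mul (by positivity) hΔ0.ne',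
      Real.log_mul (by norm_num) hε0.ne',
      Real.log_mul (by positivity) hu2,
      Real.log_pow, Real.log_rpow hu]
    push_cast; ring
  -- numeric log bounds
  have hl2a := Real.log_two_gt_d9
  have hl2b := Real.log_two_lt_d9
  have h3 : 41 * Real.log 3 ≤ 65 * Real.log 2 := by
    have h := Real.log_le_log (by positivity : (0:ℝ) < 3^41) (by norm_num : (3:ℝ)^41 ≤ 2^65)
    rwa [Real.log_pow, Real.log_pow, Nat.cast_ofNat] at h
  have h5 : 65 * Real.log 2 ≤ 28 * Real.log 5 := by
    have h := Real.log_le_log (by positivity : (0:ℝ) < 2^65) (by norm_num : (2:ℝ)^65 ≤ 5^28)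
    rwa [Real.log_pow, Real.log_pow, Nat.cast_ofNat] at h
  have hl3 : Real.log 3 ≤ 1.099 := by linarith
  have hl6eq : Real.log 6 = Real.log 2 + Real.log 3 := by
    rw [show (6:ℝ) = 2*3 by norm_num, Real.log_mul (by norm_num) (by norm_num)]
  have hl12eq : Real.log 12 = 2 * Real.log 2 + Real.log 3 := by
    rw [show (12:ℝ) = 2^2*3 by norm_num, Real.log_mul (by norm_num) (by norm_num),
      Real.log_pow]
    push_cast; ring
  have hl100eq : Real.log 100 = 2 * Real.log 2 + 2 * Real.log 5 := by
    rw [show (100:ℝ) = 2^2*5^2 by norm_num, Real.log_mul (by norm_num) (by norm_num),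
      Real.log_pow, Real.log_pow]
    push_cast; ring
  have hl6 : Real.log 6 ≤ 1.7921 := by rw [hl6eq]; linarith
  have hl6a : (0:ℝ) ≤ Real.log 6 := Real.log_nonneg (by norm_num)
  have hl12 : Real.log 12 ≤ 2.4852 := by rw [hl12eq]; linarith
  have hl12a : (0:ℝ) ≤ Real.log 12 := Real.log_nonneg (by norm_num)
  have hL : (4.6044:ℝ) ≤ Real.log 100 := by rw [hl100eq]; linarith
  have hlK : (0:ℝ) ≤ Real.log K := Real.log_nonneg hK
  -- conclude log X ≤ 0
  have hkey := key_ineq s (n:ℝ) (Real.log 100) (Real.log 3) (Real.log 6) (Real.log 12)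
    (Real.log K) hs hsn hns (by exact_mod_cast hn1) hlK hl3 hl6a hl6 hl12a hl12 hL
  have hlogX0 : Real.log X ≤ 0 := by
    rw [hlogX, hlogu, hlogε, ← hs2]
    linarith [hkey]
  have hX1 : X ≤ 1 := by
    have := Real.exp_le_exp.2 hlogX0
    rwa [Real.exp_log hX0, Real.exp_zero] at this
  exact hDn.trans hX1
end

section
/- Let v be a sparse vertex (fewer than (1-ε)Δ friends), let c be a color, and let N_c(v) = {w ∈ N(v) : c ∈ Pal(w)} with |N_c(v)| ≥ (1-ε/2)Δ, where εΔ ≥ 3 and ε < 1/5. Let U be the set of ordered pairs (x,y) with x,y ∈ N_c(v), x < y, xy ∉ E. Then |U| ≥ (1/2)·(εΔ/2)·(εΔ/2 − 1); in particular |U| = Ω(ε²Δ²). -/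
/-!
Since `v` is sparse and `N_c(v)` is large, at least `εΔ/2` vertices `w ∈ N_c(v)` are not friends
of `v`. Such a `w` shares fewer than `(1-ε)Δ` neighbours with `v`, so at least `εΔ/2 - 1` vertices
of `N_c(v)` are distinct from and non-adjacent to `w`. This gives at least `(εΔ/2)(εΔ/2 - 1)`
ordered non-adjacent pairs in `N_c(v)`, and each unordered pair is counted twice.
-/

open Finset

attribute [local instance] Classical.propDecidable

variable {V : Type*}

namespace Finset

variable {α β : Type*}

lemma card_filter_product_eq_sum (s : Finset α) (t : Finset β) (P : α → β → Prop)
    [∀ a, DecidablePred (P a)] [DecidablePred fun p : α × β => P p.1 p.2] :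
    #{p ∈ s ×ˢ t | P p.1 p.2} = ∑ a ∈ s, #{b ∈ t | P a b} := by
  simp only [card_filter, sum_product]
  congr!

lemma two_mul_card_filter_lt_of_symmetric [LinearOrder α] (s : Finset α) {r : α → α → Prop}
    [DecidableRel r] (hr : ∀ x y, r x y → r y x) :
    2 * #{p ∈ s ×ˢ s | p.1 < p.2 ∧ r p.1 p.2} = #{p ∈ s ×ˢ s | p.1 ≠ p.2 ∧ r p.1 p.2} := by
  set u : Finset (α × α) := {p ∈ s ×ˢ s | p.1 < p.2 ∧ r p.1 p.2}
  set v : Finset (α × α) := {p ∈ s ×ˢ s | p.2 < p.1 ∧ r p.1 p.2}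
  have disj : Disjoint u v := by grind [disjoint_left]
  have union : u.disjUnion v disj = {p ∈ s ×ˢ s | p.1 ≠ p.2 ∧ r p.1 p.2} := by grind
  have swap : #u = #v := Finset.card_equiv (Equiv.prodComm α α) (by grind)
  rw [← union, card_disjUnion, ← swap, two_mul]

end Finset

namespace SimpleGraph

variable [Fintype V] [DecidableEq V] (G : SimpleGraph V) [DecidableRel G.Adj]

lemma card_le_card_filter_nonadj_add_card_inter_add_one {s : Finset V} {v : V}
    (hs : s ⊆ G.neighborFinset v) (w : V) :
    #s ≤ #{x ∈ s | w ≠ x ∧ ¬ G.Adj w x} + #(G.neighborFinset v ∩ G.neighborFinset w) + 1 := by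
  have hcover : s ⊆ {x ∈ s | w ≠ x ∧ ¬ G.Adj w x} ∪
      insert w (G.neighborFinset v ∩ G.neighborFinset w) := by
    intro x hx
    have hxv := hs hx
    by_cases hwx : w = x
    · simp [hwx]
    by_cases hadj : G.Adj w x
    · simp_all
    · simp [hx, hwx, hadj]
  calc #s ≤ _ := card_le_card hcover
    _ ≤ _ := card_union_le _ _
    _ ≤ _ := by grw [card_insert_le]; omega

end SimpleGraph

section Sparse

variable [Fintype V] [DecidableEq V] (G : SimpleGraph V) [DecidableRel G.Adj]
  {Δ : ℕ} {ε : ℝ} {v : V} {s : Finset V}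

lemma card_le_card_filter_not_friendAdj_add_card_friends :
    #s ≤ #{w ∈ s | ¬ friendAdj G Δ ε v w} + #(friends G Δ ε v) := by
  rw [← card_filter_add_card_filter_not (fun w => friendAdj G Δ ε v w), add_comm]
  gcongr
  intro w hw
  simp [friends, (mem_filter.1 hw).2]

lemma le_card_filter_not_friendAdj (hsparse : ¬ isDense G Δ ε v)
    (hs : (1 - ε / 2) * Δ ≤ #s) : ε * Δ / 2 ≤ (#{w ∈ s | ¬ friendAdj G Δ ε v w} : ℝ) := by
  rw [isDense, not_le] at hsparse
  have : (#s : ℝ) ≤ #{w ∈ s | ¬ friendAdj G Δ ε v w} + #(friends G Δ ε v) := by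
    exact_mod_cast card_le_card_filter_not_friendAdj_add_card_friends G
  linarith

lemma le_card_filter_nonadj_of_not_friendAdj (hsub : s ⊆ G.neighborFinset v)
    (hs : (1 - ε / 2) * Δ ≤ #s) {w : V} (hw : w ∈ s) (hvw : ¬ friendAdj G Δ ε v w) :
    ε * Δ / 2 - 1 ≤ (#{x ∈ s | w ≠ x ∧ ¬ G.Adj w x} : ℝ) := by
  have hcommon : (#(G.neighborFinset v ∩ G.neighborFinset w) : ℝ) < (1 - ε) * Δ :=
    lt_of_not_ge fun h => hvw ⟨(G.mem_neighborFinset v w).1 (hsub hw), h⟩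
  have : (#s : ℝ) ≤ #{x ∈ s | w ≠ x ∧ ¬ G.Adj w x} +
      #(G.neighborFinset v ∩ G.neighborFinset w) + 1 := by
    exact_mod_cast G.card_le_card_filter_nonadj_add_card_inter_add_one hsub w
  linarith

end Sparse

theorem stmt_14_general {C : Type*} [Fintype V] [DecidableEq V] [LinearOrder V] [DecidableEq C]
    (G : SimpleGraph V) [DecidableRel G.Adj]
    (Δ : ℕ) (ε : ℝ) (hεΔ : 3 ≤ ε * (Δ : ℝ))
    (Pal : V → Finset C) (c : C) (v : V)
    (hsparse : ¬ isDense G Δ ε v) :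
    let Nc := (G.neighborFinset v).filter (fun w => c ∈ Pal w)
    (1 - ε/2) * (Δ : ℝ) ≤ (Nc.card : ℝ) →
    (1/2) * (ε * (Δ : ℝ)/2) * (ε * (Δ : ℝ)/2 - 1) ≤
      (((Nc ×ˢ Nc).filter (fun p => p.1 < p.2 ∧ ¬ G.Adj p.1 p.2)).card : ℝ) := by
  intro Nc hNc
  set W := {w ∈ Nc | ¬ friendAdj G Δ ε v w}
  have hW : ε * Δ / 2 ≤ (#W : ℝ) := le_card_filter_not_friendAdj G hsparse hNc
  have hnonadj (w) (hw : w ∈ W) : ε * Δ / 2 - 1 ≤ (#{x ∈ Nc | w ≠ x ∧ ¬ G.Adj w x} : ℝ) :=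
    le_card_filter_nonadj_of_not_friendAdj G (filter_subset _ _) hNc (mem_filter.1 hw).1
      (mem_filter.1 hw).2
  have hpairs : 2 * #{p ∈ Nc ×ˢ Nc | p.1 < p.2 ∧ ¬ G.Adj p.1 p.2} =
      ∑ w ∈ Nc, #{x ∈ Nc | w ≠ x ∧ ¬ G.Adj w x} := by
    rw [two_mul_card_filter_lt_of_symmetric Nc (r := fun x y => ¬ G.Adj x y)
      fun x y h hyx => h hyx.symm]
    convert card_filter_product_eq_sum Nc Nc fun x y => x ≠ y ∧ ¬ G.Adj x y
  calc (1/2) * (ε * (Δ : ℝ)/2) * (ε * (Δ : ℝ)/2 - 1)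
      ≤ (1/2) * (#W * (ε * Δ / 2 - 1)) := by
        rw [mul_assoc]; gcongr; linarith
    _ ≤ (1/2) * ∑ w ∈ W, (#{x ∈ Nc | w ≠ x ∧ ¬ G.Adj w x} : ℝ) := by
        gcongr; simpa using card_nsmul_le_sum W _ _ hnonadj
    _ ≤ (1/2) * ∑ w ∈ Nc, (#{x ∈ Nc | w ≠ x ∧ ¬ G.Adj w x} : ℝ) := by
        gcongr; exact filter_subset _ _
    _ = _ := by
        rw [← Nat.cast_sum, ← hpairs]; push_cast; ring

/-- For a sparse vertex `v` and a color `c` with `|N_c(v)| ≥ (1-ε/2)Δ`, `εΔ ≥ 3`,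
`ε < 1/5`, the set `U` of ordered pairs `(x,y)` with `x,y ∈ N_c(v)`, `x < y`, `xy ∉ E`
satisfies `|U| ≥ (1/2)·(εΔ/2)·(εΔ/2 - 1) = Ω(ε²Δ²)`. -/
theorem stmt_14 {C : Type*} [Fintype V] [DecidableEq V] [LinearOrder V] [DecidableEq C]
    (G : SimpleGraph V) [DecidableRel G.Adj]
    (Δ : ℕ) (ε : ℝ) (hΔ : ∀ w, G.degree w ≤ Δ)
    (hε0 : 0 < ε) (hε : ε < 1/5) (hεΔ : 3 ≤ ε * (Δ : ℝ))
    (Pal : V → Finset C) (c : C) (v : V)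
    (hsparse : ¬ isDense G Δ ε v) :
    let Nc := (G.neighborFinset v).filter (fun w => c ∈ Pal w)
    (1 - ε/2) * (Δ : ℝ) ≤ (Nc.card : ℝ) →
    (1/2) * (ε * (Δ : ℝ)/2) * (ε * (Δ : ℝ)/2 - 1) ≤
      (((Nc ×ˢ Nc).filter (fun p => p.1 < p.2 ∧ ¬ G.Adj p.1 p.2)).card : ℝ) :=
  stmt_14_general G Δ ε hεΔ Pal c v hsparse
end

section
/- Let v be a vertex of degree d(v) ≥ (1-ε/4)Δ in a graph where every vertex w has a palette of size exactly Δ+1 drawn from a color set 𝒞. Partition 𝒞 into B₁ = {c ∉ Pal(v)}, B₂ = {c ∈ Pal(v) : |N_c(v)| ≥ (1-ε/2)Δ}, B₃ = {c ∈ Pal(v) : |N_c(v)| < (1-ε/2)Δ}. If |B₂| < Δ/4, then Σ_{c ∈ B₁} |N_c(v)| ≥ εΔ²/16. -/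
/-!
Double counting the pairs (colour, neighbour of `v` whose palette contains it) gives
`∑_{c ∈ 𝒞} |N_c(v)| = (Δ+1) d(v)`, so the mass `∑_{c ∉ Pal v} |N_c(v)|` outside the palette of `v`
equals the total deficit `∑_{c ∈ Pal v} (d(v) - |N_c(v)|)`. Every colour of `B₃` has deficit at
least `d(v) - (1-ε/2)Δ ≥ εΔ/4`, and `|B₃| = Δ + 1 - |B₂| > 3Δ/4`, so the mass is at least
`3εΔ²/16`.
-/

open Finset

attribute [local instance] Classical.propDecidable

section Palettes

variable {V C : Type*} [DecidableEq C] {𝒞 : Finset C} {Pal : V → Finset C} {s : Finset V}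

theorem sum_card_filter_mem_palette_eq {k : ℕ}
    (hsub : ∀ w ∈ s, Pal w ⊆ 𝒞) (hcard : ∀ w ∈ s, #(Pal w) = k) :
    ∑ c ∈ 𝒞, #(s.filter fun w => c ∈ Pal w) = k * #s := by
  have hswap :=
    sum_card_bipartiteAbove_eq_sum_card_bipartiteBelow (fun c w => c ∈ Pal w) (s := 𝒞) (t := s)
  simp only [bipartiteAbove, bipartiteBelow] at hswap
  rw [hswap, sum_congr rfl fun w hw => by
      rw [filter_mem_eq_inter, inter_eq_right.2 (hsub w hw), hcard w hw],
    sum_const, smul_eq_mul, mul_comm]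

theorem sum_card_filter_notMem_palette_eq {k : ℕ} {P : Finset C} (hP : P ⊆ 𝒞) (hPk : #P = k)
    (hsub : ∀ w ∈ s, Pal w ⊆ 𝒞) (hcard : ∀ w ∈ s, #(Pal w) = k) :
    ∑ c ∈ 𝒞.filter (· ∉ P), (#(s.filter fun w => c ∈ Pal w) : ℝ) =
      ∑ c ∈ P, ((#s : ℝ) - #(s.filter fun w => c ∈ Pal w)) := by
  have htotal : ∑ c ∈ 𝒞, (#(s.filter fun w => c ∈ Pal w) : ℝ) = k * #s := by
    exact_mod_cast sum_card_filter_mem_palette_eq hsub hcard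
  rw [← sum_filter_add_sum_filter_not 𝒞 (· ∈ P), filter_mem_eq_inter, inter_eq_right.2 hP]
    at htotal
  rw [sum_sub_distrib, sum_const, hPk, nsmul_eq_mul]
  linarith

end Palettes

theorem stmt_15_general {V C : Type*} [Fintype V] [DecidableEq C]
    (G : SimpleGraph V) [DecidableRel G.Adj] (Δ : ℕ) (ε : ℝ)
    (hε0 : 0 < ε)
    (𝒞 : Finset C) (Pal : V → Finset C)
    (hPal : ∀ w, Pal w ⊆ 𝒞 ∧ (Pal w).card = Δ + 1)
    (v : V) (hd : (1 - ε/4) * (Δ : ℝ) ≤ (G.degree v : ℝ)) :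
    let Nc := fun c : C => (G.neighborFinset v).filter (fun w => c ∈ Pal w)
    let B₂ := (Pal v).filter (fun c => (1 - ε/2) * (Δ : ℝ) ≤ ((Nc c).card : ℝ))
    (B₂.card : ℝ) < (Δ : ℝ) / 4 →
    ε * (Δ : ℝ)^2 / 16 ≤
      ∑ c ∈ 𝒞.filter (fun c => c ∉ Pal v), ((Nc c).card : ℝ) := by
  intro Nc B₂ hB₂
  set B₃ := (Pal v).filter fun c => ¬(1 - ε/2) * (Δ : ℝ) ≤ #(Nc c)
  have hB₃ : (#B₃ : ℝ) = Δ + 1 - #B₂ := by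
    rw [eq_sub_iff_add_eq, add_comm]
    exact_mod_cast (card_filter_add_card_filter_not _).trans (hPal v).2
  have hdeficit : ∀ c ∈ B₃, ε * Δ / 4 ≤ G.degree v - #(Nc c) := fun c hc => by
    linarith [(mem_filter.1 hc).2]
  have hεΔ : 0 ≤ ε * Δ := by positivity
  rw [sum_card_filter_notMem_palette_eq (s := G.neighborFinset v) (hPal v).1 (hPal v).2
    (fun w _ => (hPal w).1) (fun w _ => (hPal w).2), G.card_neighborFinset_eq_degree]
  calc ε * (Δ : ℝ) ^ 2 / 16 ≤ #B₃ • (ε * Δ / 4) := by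
        rw [nsmul_eq_mul, hB₃]; nlinarith
    _ ≤ ∑ c ∈ B₃, ((G.degree v : ℝ) - #(Nc c)) := card_nsmul_le_sum _ _ _ hdeficit
    _ ≤ ∑ c ∈ Pal v, ((G.degree v : ℝ) - #(Nc c)) :=
        sum_le_sum_of_subset_of_nonneg (filter_subset _ _) fun c _ _ => sub_nonneg.2 <| by
          exact_mod_cast G.card_neighborFinset_eq_degree v ▸ card_filter_le _ _

/-- If every vertex has a palette of size exactly `Δ+1` from a color set `𝒞`,
`d(v) ≥ (1-ε/4)Δ`, and the set `B₂` of palette colors `c` with `|N_c(v)| ≥ (1-ε/2)Δ`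
has fewer than `Δ/4` elements, then `Σ_{c ∉ Pal(v)} |N_c(v)| ≥ εΔ²/16`. -/
theorem stmt_15 {V C : Type*} [Fintype V] [DecidableEq V] [DecidableEq C]
    (G : SimpleGraph V) [DecidableRel G.Adj] (Δ : ℕ) (ε : ℝ)
    (hΔ : ∀ w, G.degree w ≤ Δ) (hε0 : 0 < ε) (hε1 : ε < 1)
    (𝒞 : Finset C) (Pal : V → Finset C)
    (hPal : ∀ w, Pal w ⊆ 𝒞 ∧ (Pal w).card = Δ + 1)
    (v : V) (hd : (1 - ε/4) * (Δ : ℝ) ≤ (G.degree v : ℝ)) :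
    let Nc := fun c : C => (G.neighborFinset v).filter (fun w => c ∈ Pal w)
    let B₂ := (Pal v).filter (fun c => (1 - ε/2) * (Δ : ℝ) ≤ ((Nc c).card : ℝ))
    (B₂.card : ℝ) < (Δ : ℝ) / 4 →
    ε * (Δ : ℝ)^2 / 16 ≤
      ∑ c ∈ 𝒞.filter (fun c => c ∉ Pal v), ((Nc c).card : ℝ) :=
  stmt_15_general G Δ ε hε0 𝒞 Pal hPal v hd
end
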